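/- If σ ∈ (0,1], then there exists a threshold a* > 0 such that for every a > a* and every b ∈ (0,1), the unique fixed point x̄ of f_{a,b,σ} in (0,1) is repelling. In contrast, if σ = 0, then for every a > 0 there exists b ∈ (0,1) such that the unique fixed point x̄ = b of f_{a,b,0} in (0,1) is attracting. -/

import Mathlib

open Real Filter Set

/-- The EWA dynamics map `f_{a,b,σ}`. -/
noncomputable def f (a b σ x : ℝ) : ℝ :=
  x ^ (1 - σ) / (x ^ (1 - σ) + (1 - x) ^ (1 - σ) * Real.exp (a * (x - b)))

/-- A fixed point `x` of `g` is attracting if some open neighborhood of `x` is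
attracted to `x` under iteration of `g`. -/
def IsAttractingFixedPt (g : ℝ → ℝ) (x : ℝ) : Prop :=
  g x = x ∧ ∃ U : Set ℝ, IsOpen U ∧ x ∈ U ∧
    ∀ y ∈ U, Filter.Tendsto (fun n => g^[n] y) Filter.atTop (nhds x)

/-- A fixed point `x` of `g` is repelling if there is an open neighborhood `U` of `x`
such that every `y ∈ U`, `y ≠ x`, eventually leaves `U`. -/
def IsRepellingFixedPt (g : ℝ → ℝ) (x : ℝ) : Prop :=
  g x = x ∧ ∃ U : Set ℝ, IsOpen U ∧ x ∈ U ∧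
    ∀ y ∈ U, y ≠ x → ∃ n : ℕ, g^[n] y ∉ U

/-! ### Auxiliary material -/

/-- Denominator of `f`. -/
noncomputable def Dd (a b σ x : ℝ) : ℝ :=
  x ^ (1 - σ) + (1 - x) ^ (1 - σ) * Real.exp (a * (x - b))

/-- Explicit derivative of `f a b σ` (valid on `(0,1)`). -/
noncomputable def fd (a b σ x : ℝ) : ℝ :=
  ((1 - σ) * x ^ (1 - σ - 1) * Dd a b σ x
    - x ^ (1 - σ) * ((1 - σ) * x ^ (1 - σ - 1)
        - (1 - σ) * (1 - x) ^ (1 - σ - 1) * Real.exp (a * (x - b))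
        + (1 - x) ^ (1 - σ) * (a * Real.exp (a * (x - b)))))
   / (Dd a b σ x) ^ 2

lemma Dd_pos (a b σ : ℝ) {x : ℝ} (hx : x ∈ Set.Ioo (0:ℝ) 1) : 0 < Dd a b σ x :=
  add_pos (Real.rpow_pos_of_pos hx.1 _)
    (mul_pos (Real.rpow_pos_of_pos (by linarith [hx.2]) _) (Real.exp_pos _))

lemma f_hasDerivAt (a b σ : ℝ) {x : ℝ} (hx : x ∈ Set.Ioo (0:ℝ) 1) :
    HasDerivAt (f a b σ) (fd a b σ x) x := by
  obtain ⟨hx0, hx1⟩ := hx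
  have hx1' : (0:ℝ) < 1 - x := by linarith
  have hg : HasDerivAt (fun y : ℝ => y ^ (1 - σ)) ((1 - σ) * x ^ (1 - σ - 1)) x :=
    Real.hasDerivAt_rpow_const (Or.inl hx0.ne')
  have hh0 : HasDerivAt (fun y : ℝ => 1 - y) (-1 : ℝ) x := by
    simpa using (hasDerivAt_id x).const_sub 1
  have hh : HasDerivAt (fun y : ℝ => (1 - y) ^ (1 - σ))
      ((-1) * (1 - σ) * (1 - x) ^ (1 - σ - 1)) x := hh0.rpow_const (Or.inl hx1'.ne')
  have hl : HasDerivAt (fun y : ℝ => a * (y - b)) a x := by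
    simpa using ((hasDerivAt_id x).sub_const b).const_mul a
  have hE : HasDerivAt (fun y : ℝ => Real.exp (a * (y - b))) (Real.exp (a * (x - b)) * a) x :=
    hl.exp
  have hD : HasDerivAt (fun y : ℝ => y ^ (1 - σ) + (1 - y) ^ (1 - σ) * Real.exp (a * (y - b)))
      ((1 - σ) * x ^ (1 - σ - 1) +
       ((-1) * (1 - σ) * (1 - x) ^ (1 - σ - 1) * Real.exp (a * (x - b)) +
        (1 - x) ^ (1 - σ) * (Real.exp (a * (x - b)) * a))) x := hg.add (hh.mul hE)
  have hD0 : x ^ (1 - σ) + (1 - x) ^ (1 - σ) * Real.exp (a * (x - b)) ≠ 0 :=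
    (Dd_pos a b σ ⟨hx0, hx1⟩).ne'
  have key := hg.div hD hD0
  have hfe : f a b σ = fun y : ℝ =>
      y ^ (1 - σ) / (y ^ (1 - σ) + (1 - y) ^ (1 - σ) * Real.exp (a * (y - b))) := rfl
  rw [hfe]
  refine key.congr_deriv ?_
  unfold fd Dd
  ring

lemma fd_contAt (a b σ : ℝ) {x : ℝ} (hx : x ∈ Set.Ioo (0:ℝ) 1) :
    ContinuousAt (fd a b σ) x := by
  obtain ⟨hx0, hx1⟩ := hx
  have hx1' : (0:ℝ) < 1 - x := by linarith
  have c1 : ContinuousAt (fun y : ℝ => y ^ (1 - σ)) x :=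
    Real.continuousAt_rpow_const x _ (Or.inl hx0.ne')
  have c2 : ContinuousAt (fun y : ℝ => y ^ (1 - σ - 1)) x :=
    Real.continuousAt_rpow_const x _ (Or.inl hx0.ne')
  have csub : ContinuousAt (fun y : ℝ => 1 - y) x := continuousAt_const.sub continuousAt_id
  have c3 : ContinuousAt (fun y : ℝ => (1 - y) ^ (1 - σ)) x :=
    csub.rpow_const (Or.inl hx1'.ne')
  have c4 : ContinuousAt (fun y : ℝ => (1 - y) ^ (1 - σ - 1)) x :=
    csub.rpow_const (Or.inl hx1'.ne')
  have c5 : ContinuousAt (fun y : ℝ => Real.exp (a * (y - b))) x :=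
    (continuousAt_const.mul (continuousAt_id.sub continuousAt_const)).rexp
  have cD : ContinuousAt (Dd a b σ) x := c1.add (c3.mul c5)
  have hD0 : Dd a b σ x ≠ 0 := (Dd_pos a b σ ⟨hx0, hx1⟩).ne'
  unfold fd
  exact (((continuousAt_const.mul c2).mul cD).sub
      (c1.mul (((continuousAt_const.mul c2).sub ((continuousAt_const.mul c4).mul c5)).add
        (c3.mul (continuousAt_const.mul c5))))).div (cD.pow 2) (pow_ne_zero 2 hD0)

lemma fixed_eq (a b σ : ℝ) {x : ℝ} (hx : x ∈ Set.Ioo (0:ℝ) 1) (hfix : f a b σ x = x) :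
    (1 - x) * x ^ (1 - σ) = x * ((1 - x) ^ (1 - σ) * Real.exp (a * (x - b))) := by
  have hD0 : x ^ (1 - σ) + (1 - x) ^ (1 - σ) * Real.exp (a * (x - b)) ≠ 0 :=
    (Dd_pos a b σ hx).ne'
  unfold f at hfix
  rw [div_eq_iff hD0] at hfix
  linear_combination hfix

lemma fd_fixed (a b σ : ℝ) {x : ℝ} (hx : x ∈ Set.Ioo (0:ℝ) 1) (hfix : f a b σ x = x) :
    fd a b σ x = (1 - σ) - a * x * (1 - x) := by
  obtain ⟨hx0, hx1⟩ := hx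
  have hx1' : (0:ℝ) < 1 - x := by linarith
  have hG : 0 < x ^ (1 - σ) := Real.rpow_pos_of_pos hx0 _
  have hH : 0 < (1 - x) ^ (1 - σ) := Real.rpow_pos_of_pos hx1' _
  have hfix' := fixed_eq a b σ ⟨hx0, hx1⟩ hfix
  have hxg : x ^ (1 - σ - 1) = x ^ (1 - σ) / x := by
    rw [Real.rpow_sub hx0, Real.rpow_one]
  have hhg : (1 - x) ^ (1 - σ - 1) = (1 - x) ^ (1 - σ) / (1 - x) := by
    rw [Real.rpow_sub hx1', Real.rpow_one]
  have hEeq : Real.exp (a * (x - b)) = (1 - x) * x ^ (1 - σ) / (x * (1 - x) ^ (1 - σ)) := by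
    field_simp
    linear_combination -hfix'
  unfold fd Dd
  rw [hxg, hhg, hEeq]
  have h1 : x ^ (1 - σ) + (1 - x) ^ (1 - σ) * ((1 - x) * x ^ (1 - σ) / (x * (1 - x) ^ (1 - σ)))
      = x ^ (1 - σ) / x := by
    field_simp
    ring
  rw [h1]
  field_simp
  ring

lemma fixed_log (a b σ : ℝ) {x : ℝ} (hx : x ∈ Set.Ioo (0:ℝ) 1) (hfix : f a b σ x = x) :
    a * (x - b) = σ * (Real.log (1 - x) - Real.log x) := by
  obtain ⟨hx0, hx1⟩ := hx
  have hx1' : (0:ℝ) < 1 - x := by linarith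
  have hG : 0 < x ^ (1 - σ) := Real.rpow_pos_of_pos hx0 _
  have hH : 0 < (1 - x) ^ (1 - σ) := Real.rpow_pos_of_pos hx1' _
  have h := fixed_eq a b σ ⟨hx0, hx1⟩ hfix
  have hEeq : Real.exp (a * (x - b)) = (1 - x) * x ^ (1 - σ) / (x * (1 - x) ^ (1 - σ)) := by
    field_simp
    linear_combination -h
  have hl := congrArg Real.log hEeq
  rw [Real.log_exp, Real.log_div (by positivity) (by positivity),
    Real.log_mul hx1'.ne' hG.ne', Real.log_mul hx0.ne' hH.ne',
    Real.log_rpow hx0, Real.log_rpow hx1'] at hl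
  rw [hl]
  ring

lemma key_bound (σ a t : ℝ) (hσ : 0 < σ) (ht : 0 < t) (ht2 : t ≤ 1/2)
    (ha : 8 * Real.exp (4 / σ) < a) (h : -(σ * Real.log (2 * t)) ≤ a * t) :
    2 - σ < a * t * (1 - t) := by
  have hexp : (0:ℝ) < Real.exp (4 / σ) := Real.exp_pos _
  have ha0 : (0:ℝ) < a := by nlinarith
  have ht1 : (1:ℝ)/2 ≤ 1 - t := by linarith
  rcases le_or_gt (4 / a) t with hcase | hcase
  · have h4 : 4 ≤ a * t := by
      rw [div_le_iff₀ ha0] at hcase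
      linarith
    nlinarith
  · have h2t : 2 * t < 8 / a := by
      rw [lt_div_iff₀ ha0] at hcase ⊢
      linarith
    have h8a : Real.log (8 / a) < -(4 / σ) := by
      rw [Real.log_div (by norm_num) ha0.ne']
      have h9 : Real.log (8 * Real.exp (4 / σ)) < Real.log a :=
        Real.log_lt_log (by positivity) ha
      rw [Real.log_mul (by norm_num) hexp.ne', Real.log_exp] at h9
      linarith
    have hlt : Real.log (2 * t) < -(4 / σ) := by
      calc Real.log (2 * t) ≤ Real.log (8 / a) :=
            Real.log_le_log (by linarith) h2t.le
        _ < -(4 / σ) := h8a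
    have h4 : 4 < a * t := by
      have h5 : σ * (4 / σ) < -(σ * Real.log (2 * t)) := by nlinarith
      have h44 : σ * (4 / σ) = 4 := by field_simp
      linarith [h]
    nlinarith

lemma xbar_bound (σ a b : ℝ) {x : ℝ} (hσ : 0 < σ) (ha : 8 * Real.exp (4 / σ) < a)
    (hb : b ∈ Set.Ioo (0:ℝ) 1) (hx : x ∈ Set.Ioo (0:ℝ) 1) (hfix : f a b σ x = x) :
    2 - σ < a * x * (1 - x) := by
  obtain ⟨hx0, hx1⟩ := hx
  have hx1' : (0:ℝ) < 1 - x := by linarith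
  have hexp : (0:ℝ) < Real.exp (4 / σ) := Real.exp_pos _
  have ha0 : (0:ℝ) < a := by nlinarith
  have hlog := fixed_log a b σ ⟨hx0, hx1⟩ hfix
  rcases le_or_gt x (1/2) with hc | hc
  · have hlog2 : 0 ≤ Real.log (2 * (1 - x)) := Real.log_nonneg (by linarith)
    rw [Real.log_mul (by norm_num) hx1'.ne'] at hlog2
    have hsplit : Real.log (2 * x) = Real.log 2 + Real.log x :=
      Real.log_mul (by norm_num) hx0.ne'
    have h1 : -(σ * Real.log (2 * x)) ≤ a * x := by
      have h2 : -(σ * Real.log (2 * x)) ≤ σ * (Real.log (1 - x) - Real.log x) := by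
        rw [hsplit]
        nlinarith
      have h3 : a * (x - b) ≤ a * x := by nlinarith [hb.1]
      linarith [hlog ▸ h3, h2, hlog]
    exact key_bound σ a x hσ hx0 hc ha h1
  · have hlog2 : 0 ≤ Real.log (2 * x) := Real.log_nonneg (by linarith)
    rw [Real.log_mul (by norm_num) hx0.ne'] at hlog2
    have hsplit : Real.log (2 * (1 - x)) = Real.log 2 + Real.log (1 - x) :=
      Real.log_mul (by norm_num) hx1'.ne'
    have h1 : -(σ * Real.log (2 * (1 - x))) ≤ a * (1 - x) := by
      have h2 : -(σ * Real.log (2 * (1 - x))) ≤ σ * (Real.log x - Real.log (1 - x)) := by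
        rw [hsplit]
        nlinarith
      have h3 : a * (b - x) ≤ a * (1 - x) := by nlinarith [hb.2]
      have h4 : a * (b - x) = σ * (Real.log x - Real.log (1 - x)) := by linarith [hlog]
      linarith [h2, h3, h4]
    have hkb := key_bound σ a (1 - x) hσ hx1' (by linarith) ha h1
    nlinarith [hkb]

lemma mvt_icc (g g' : ℝ → ℝ) (l r : ℝ)
    (hd : ∀ x ∈ Set.Icc l r, HasDerivAt g (g' x) x)
    {y z : ℝ} (hy : y ∈ Set.Icc l r) (hz : z ∈ Set.Icc l r) :
    ∃ c ∈ Set.Icc l r, g z - g y = g' c * (z - y) := by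
  rcases lt_trichotomy y z with h | h | h
  · have hsub : Set.Icc y z ⊆ Set.Icc l r := Set.Icc_subset_Icc hy.1 hz.2
    have hsub' : Set.Ioo y z ⊆ Set.Icc l r := fun t ht => hsub (Set.Ioo_subset_Icc_self ht)
    obtain ⟨c, hc, hceq⟩ := exists_hasDerivAt_eq_slope g g' h
      (fun t ht => (hd t (hsub ht)).continuousAt.continuousWithinAt)
      (fun t ht => hd t (hsub' (Set.mem_Ioo.mpr ht)))
    refine ⟨c, hsub' hc, ?_⟩
    rw [hceq, div_mul_cancel₀]
    exact sub_ne_zero.mpr h.ne'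
  · exact ⟨y, hy, by rw [h]; ring⟩
  · have hsub : Set.Icc z y ⊆ Set.Icc l r := Set.Icc_subset_Icc hz.1 hy.2
    have hsub' : Set.Ioo z y ⊆ Set.Icc l r := fun t ht => hsub (Set.Ioo_subset_Icc_self ht)
    obtain ⟨c, hc, hceq⟩ := exists_hasDerivAt_eq_slope g g' h
      (fun t ht => (hd t (hsub ht)).continuousAt.continuousWithinAt)
      (fun t ht => hd t (hsub' (Set.mem_Ioo.mpr ht)))
    refine ⟨c, hsub' hc, ?_⟩
    have h5 : g y - g z = g' c * (y - z) := by
      rw [hceq, div_mul_cancel₀]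
      exact sub_ne_zero.mpr h.ne'
    linarith [h5]

lemma repelling_of_deriv (g g' : ℝ → ℝ) (x₀ ε K : ℝ) (hε : 0 < ε) (hK : 1 < K)
    (hfix : g x₀ = x₀)
    (hd : ∀ x ∈ Set.Icc (x₀ - ε) (x₀ + ε), HasDerivAt g (g' x) x)
    (hb : ∀ x ∈ Set.Icc (x₀ - ε) (x₀ + ε), K ≤ |g' x|) :
    IsRepellingFixedPt g x₀ := by
  have hx₀ : x₀ ∈ Set.Icc (x₀ - ε) (x₀ + ε) := by constructor <;> linarith
  refine ⟨hfix, Set.Ioo (x₀ - ε) (x₀ + ε), isOpen_Ioo, by constructor <;> linarith, ?_⟩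
  intro y hy hne
  by_contra hcon
  push_neg at hcon
  have key : ∀ z ∈ Set.Icc (x₀ - ε) (x₀ + ε), K * |z - x₀| ≤ |g z - x₀| := by
    intro z hz
    obtain ⟨c, hc, hceq⟩ := mvt_icc g g' _ _ hd hx₀ hz
    rw [hfix] at hceq
    calc K * |z - x₀| ≤ |g' c| * |z - x₀| :=
          mul_le_mul_of_nonneg_right (hb c hc) (abs_nonneg _)
      _ = |g' c * (z - x₀)| := (abs_mul _ _).symm
      _ = |g z - x₀| := by rw [← hceq]
  have hiter : ∀ n : ℕ, K ^ n * |y - x₀| ≤ |g^[n] y - x₀| := by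
    intro n
    induction n with
    | zero => simp
    | succ n ih =>
      have hmem : g^[n] y ∈ Set.Icc (x₀ - ε) (x₀ + ε) :=
        Set.Ioo_subset_Icc_self (hcon n)
      have h1 := key _ hmem
      rw [Function.iterate_succ_apply']
      calc K ^ (n + 1) * |y - x₀| = K * (K ^ n * |y - x₀|) := by ring
        _ ≤ K * |g^[n] y - x₀| :=
            mul_le_mul_of_nonneg_left ih (by linarith)
        _ ≤ |g (g^[n] y) - x₀| := h1
  have hy0 : 0 < |y - x₀| := abs_pos.mpr (sub_ne_zero.mpr hne)
  obtain ⟨n, hn⟩ := pow_unbounded_of_one_lt (ε / |y - x₀|) hK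
  have hlt : ε < K ^ n * |y - x₀| := by
    rw [div_lt_iff₀ hy0] at hn
    linarith
  have hmemn := hcon n
  have h6 : |g^[n] y - x₀| < ε := abs_lt.mpr ⟨by linarith [hmemn.1], by linarith [hmemn.2]⟩
  linarith [hiter n]

lemma attracting_of_deriv (g g' : ℝ → ℝ) (x₀ ε k : ℝ) (hε : 0 < ε) (hk0 : 0 ≤ k) (hk : k < 1)
    (hfix : g x₀ = x₀)
    (hd : ∀ x ∈ Set.Icc (x₀ - ε) (x₀ + ε), HasDerivAt g (g' x) x)
    (hb : ∀ x ∈ Set.Icc (x₀ - ε) (x₀ + ε), |g' x| ≤ k) :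
    IsAttractingFixedPt g x₀ := by
  have hx₀ : x₀ ∈ Set.Icc (x₀ - ε) (x₀ + ε) := by constructor <;> linarith
  refine ⟨hfix, Set.Ioo (x₀ - ε) (x₀ + ε), isOpen_Ioo, by constructor <;> linarith, ?_⟩
  intro y hy
  have key : ∀ z ∈ Set.Icc (x₀ - ε) (x₀ + ε), |g z - x₀| ≤ k * |z - x₀| := by
    intro z hz
    obtain ⟨c, hc, hceq⟩ := mvt_icc g g' _ _ hd hx₀ hz
    rw [hfix] at hceq
    calc |g z - x₀| = |g' c * (z - x₀)| := by rw [hceq]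
      _ = |g' c| * |z - x₀| := abs_mul _ _
      _ ≤ k * |z - x₀| := mul_le_mul_of_nonneg_right (hb c hc) (abs_nonneg _)
  have hiter : ∀ n : ℕ, g^[n] y ∈ Set.Icc (x₀ - ε) (x₀ + ε) ∧
      |g^[n] y - x₀| ≤ k ^ n * |y - x₀| := by
    intro n
    induction n with
    | zero => exact ⟨Set.Ioo_subset_Icc_self hy, by simp⟩
    | succ n ih =>
      obtain ⟨hmem, hle⟩ := ih
      have h1 := key _ hmem
      have habs : |g^[n] y - x₀| ≤ ε := abs_le.mpr ⟨by linarith [hmem.1], by linarith [hmem.2]⟩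
      have h2 : |g (g^[n] y) - x₀| ≤ k ^ (n + 1) * |y - x₀| := by
        calc |g (g^[n] y) - x₀| ≤ k * |g^[n] y - x₀| := h1
          _ ≤ k * (k ^ n * |y - x₀|) := mul_le_mul_of_nonneg_left hle hk0
          _ = k ^ (n + 1) * |y - x₀| := by ring
      have h3 : |g (g^[n] y) - x₀| ≤ ε := by
        have h7 : k * |g^[n] y - x₀| ≤ 1 * ε :=
          mul_le_mul hk.le habs (abs_nonneg _) zero_le_one
        linarith [h1]
      rw [Function.iterate_succ_apply']
      refine ⟨?_, h2⟩
      rcases abs_le.mp h3 with ⟨hl, hr⟩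
      constructor <;> linarith
  rw [tendsto_iff_dist_tendsto_zero]
  have hb0 : Tendsto (fun n : ℕ => k ^ n * |y - x₀|) atTop (nhds 0) := by
    simpa using (tendsto_pow_atTop_nhds_zero_of_lt_one hk0 hk).mul_const |y - x₀|
  refine squeeze_zero (fun n => dist_nonneg) (fun n => ?_) hb0
  rw [Real.dist_eq]
  exact (hiter n).2

/-- For `σ > 0` there is a threshold `a*` above which the perturbed equilibrium is
repelling for every `b`; for `σ = 0` every intensity of choice admits some `b` with an
attracting Nash equilibrium. -/
theorem destabilization_threshold (σ : ℝ) (hσ : σ ∈ Set.Icc (0:ℝ) 1) :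
    (0 < σ → ∃ astar > (0:ℝ), ∀ a > astar, ∀ b ∈ Set.Ioo (0:ℝ) 1,
      ∀ xbar ∈ Set.Ioo (0:ℝ) 1, f a b σ xbar = xbar →
        IsRepellingFixedPt (f a b σ) xbar) ∧
    (σ = 0 → ∀ a > (0:ℝ), ∃ b ∈ Set.Ioo (0:ℝ) 1,
      IsAttractingFixedPt (f a b 0) b) := by
  constructor
  · -- σ > 0 : repelling
    intro hσ0
    refine ⟨8 * Real.exp (4 / σ), by positivity, ?_⟩
    intro a ha b hb xbar hxbar hfix
    have hbnd : 2 - σ < a * xbar * (1 - xbar) := xbar_bound σ a b hσ0 ha hb hxbar hfix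
    have hμ : fd a b σ xbar = (1 - σ) - a * xbar * (1 - xbar) := fd_fixed a b σ hxbar hfix
    set μ := (1 - σ) - a * xbar * (1 - xbar) with hμdef
    have hμlt : μ < -1 := by rw [hμdef]; linarith
    set K := (1 - μ) / 2 with hKdef
    have hK1 : 1 < K := by rw [hKdef]; linarith
    have hμK : μ < -K := by rw [hKdef]; linarith
    have hcont : ContinuousAt (fd a b σ) xbar := fd_contAt a b σ hxbar
    have hcont' : Tendsto (fd a b σ) (nhds xbar) (nhds μ) := by
      rw [← hμ]; exact hcont
    have hev1 : ∀ᶠ y in nhds xbar, fd a b σ y < -K := hcont'.eventually_lt_const hμK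
    have hev2 : ∀ᶠ y in nhds xbar, y ∈ Set.Ioo (0:ℝ) 1 := isOpen_Ioo.eventually_mem hxbar
    obtain ⟨δ, hδ, hδh⟩ := Metric.eventually_nhds_iff.mp (hev1.and hev2)
    have hdist : ∀ x ∈ Set.Icc (xbar - δ/2) (xbar + δ/2), dist x xbar < δ := by
      intro x hx
      rw [Real.dist_eq]
      rcases hx with ⟨h1, h2⟩
      rw [abs_lt]
      constructor <;> linarith
    refine repelling_of_deriv (f a b σ) (fd a b σ) xbar (δ/2) K (by linarith) hK1 hfix ?_ ?_
    · intro x hx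
      exact f_hasDerivAt a b σ (hδh (hdist x hx)).2
    · intro x hx
      have h1 := (hδh (hdist x hx)).1
      rw [abs_of_neg (by linarith : fd a b σ x < 0)]
      linarith
  · -- σ = 0 : attracting
    intro _ a ha
    set b := min (1/2 : ℝ) (1/a) with hbdef
    have hb0 : 0 < b := lt_min (by norm_num) (by positivity)
    have hb2 : b ≤ 1/2 := min_le_left _ _
    have hba : b ≤ 1/a := min_le_right _ _
    have hb1 : b < 1 := lt_of_le_of_lt hb2 (by norm_num)
    have hbmem : b ∈ Set.Ioo (0:ℝ) 1 := ⟨hb0, hb1⟩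
    have hfix : f a b 0 b = b := by
      have h0 : (1:ℝ) - 0 = 1 := by norm_num
      simp only [f, h0, Real.rpow_one, sub_self, mul_zero, Real.exp_zero, mul_one]
      have h2 : b + (1 - b) = 1 := by ring
      rw [h2, div_one]
    refine ⟨b, hbmem, ?_⟩
    have hμ : fd a b 0 b = (1 - 0) - a * b * (1 - b) := fd_fixed a b 0 hbmem hfix
    have hab1 : a * b ≤ 1 := by
      have h5 : a * b ≤ a * (1/a) := mul_le_mul_of_nonneg_left hba ha.le
      rwa [mul_one_div, div_self ha.ne'] at h5
    have ht0 : 0 < a * b * (1 - b) := mul_pos (mul_pos ha hb0) (by linarith)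
    have ht1 : a * b * (1 - b) < 1 := by nlinarith
    set μ := 1 - a * b * (1 - b) with hμdef
    have hμ' : fd a b 0 b = μ := by rw [hμ, hμdef]; ring
    have hμ0 : 0 < μ := by rw [hμdef]; linarith
    have hμ1 : μ < 1 := by rw [hμdef]; linarith
    set k := (1 + μ) / 2 with hkdef
    have hk0 : (0:ℝ) ≤ k := by rw [hkdef]; linarith
    have hk1 : k < 1 := by rw [hkdef]; linarith
    have hμk : |μ| < k := by rw [abs_of_pos hμ0, hkdef]; linarith
    have hcont : ContinuousAt (fun y => |fd a b 0 y|) b := (fd_contAt a b 0 hbmem).abs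
    have hcont' : Tendsto (fun y => |fd a b 0 y|) (nhds b) (nhds |μ|) := by
      rw [← hμ']; exact hcont
    have hev1 : ∀ᶠ y in nhds b, |fd a b 0 y| < k := hcont'.eventually_lt_const hμk
    have hev2 : ∀ᶠ y in nhds b, y ∈ Set.Ioo (0:ℝ) 1 := isOpen_Ioo.eventually_mem hbmem
    obtain ⟨δ, hδ, hδh⟩ := Metric.eventually_nhds_iff.mp (hev1.and hev2)
    have hdist : ∀ x ∈ Set.Icc (b - δ/2) (b + δ/2), dist x b < δ := by
      intro x hx
      rw [Real.dist_eq]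
      rcases hx with ⟨h1, h2⟩
      rw [abs_lt]
      constructor <;> linarith
    refine attracting_of_deriv (f a b 0) (fd a b 0) b (δ/2) k (by linarith) hk0 hk1 hfix ?_ ?_
    · intro x hx
      exact f_hasDerivAt a b 0 (hδh (hdist x hx)).2
    · intro x hx
      exact ((hδh (hdist x hx)).1).le
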